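/- arXiv:2507.12112 — 2 statements merged into one kernel-verified Lean document; each statement's English description precedes it below -/
import Mathlib

section
/- Suppose A ⊆ ℝ^D is nonempty, compact and convex, M : ℝ^D → ℝ^D is continuous and strongly monotone with some constant ν > 0, and there exists a point â in the relative (intrinsic) interior of A with Kâ ≤ l componentwise. Then there exists a pair (a*, λ*) ∈ A × ℝ^n_+ that solves VI(W, A × ℝ^n_+). -/
open scoped RealInnerProductSpace

/-- Matrix-vector multiplication, viewed as a map between Euclidean spaces. -/
noncomputable def mulVecE {n D : ℕ} (K : Matrix (Fin n) (Fin D) ℝ)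
    (x : EuclideanSpace ℝ (Fin D)) : EuclideanSpace ℝ (Fin n) :=
  (WithLp.equiv 2 _).symm (K.mulVec ((WithLp.equiv 2 _) x))

open Finset Filter

variable {D n : ℕ}

lemma finite_minty {S : Set (EuclideanSpace ℝ (Fin D))} (hSc : Convex ℝ S)
    (hSne : S.Nonempty) (M : EuclideanSpace ℝ (Fin D) → EuclideanSpace ℝ (Fin D))
    (hmono : ∀ x y, 0 ≤ ⟪M x - M y, x - y⟫)
    (u : Finset (EuclideanSpace ℝ (Fin D))) (hu : ↑u ⊆ S) :
    ∃ x ∈ S, ∀ a ∈ u, 0 ≤ ⟪M a, a - x⟫ := by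
  classical
  rcases u.eq_empty_or_nonempty with rfl | hune
  · obtain ⟨x, hx⟩ := hSne; exact ⟨x, hx, by simp⟩
  set ι := {a // a ∈ u} with hι
  have hane : Nonempty ι := by
    obtain ⟨a, ha⟩ := hune; exact ⟨⟨a, ha⟩⟩
  set G : ι → ι → ℝ := fun i j => ⟪M i.1, j.1 - i.1⟫ with hG
  set L : (ι → ℝ) →ₗ[ℝ] (ι → ℝ) :=
    { toFun := fun s i => ∑ j, s j * G i j
      map_add' := by
        intro s t; funext i; simp [add_mul, Finset.sum_add_distrib]
      map_smul' := by
        intro c s; funext i; simp [Finset.mul_sum, mul_assoc] } with hL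
  set Cs : Set (ι → ℝ) := L '' (stdSimplex ℝ ι) with hCs
  set Kn : Set (ι → ℝ) := Set.univ.pi (fun _ : ι => Set.Iic (0:ℝ)) with hKn
  have quad : ∀ q : ι → ℝ, (∀ i, 0 ≤ q i) → ∑ i, ∑ j, q i * q j * G i j ≤ 0 := by
    intro q hq
    have h2 : (2:ℝ) * ∑ i, ∑ j, q i * q j * G i j
        = ∑ i, ∑ j, q i * q j * (G i j + G j i) := by
      have hswap : ∑ i, ∑ j, q i * q j * G i j = ∑ i, ∑ j, q i * q j * G j i := by
        rw [Finset.sum_comm]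
        congr 1; funext i; congr 1; funext j; ring_nf
      calc (2:ℝ) * ∑ i, ∑ j, q i * q j * G i j
          = (∑ i, ∑ j, q i * q j * G i j) + ∑ i, ∑ j, q i * q j * G j i := by
            rw [← hswap]; ring
        _ = ∑ i, ∑ j, q i * q j * (G i j + G j i) := by
            rw [← Finset.sum_add_distrib]
            congr 1; funext i; rw [← Finset.sum_add_distrib]
            congr 1; funext j; ring
    have hterm : ∀ i j : ι, q i * q j * (G i j + G j i) ≤ 0 := by
      intro i j
      have hGij : G i j + G j i = -⟪M i.1 - M j.1, i.1 - j.1⟫ := by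
        simp only [hG, inner_sub_left, inner_sub_right]
        ring
      rw [hGij]
      have := hmono i.1 j.1
      have hqq : 0 ≤ q i * q j := mul_nonneg (hq i) (hq j)
      nlinarith
    have : ∑ i, ∑ j, q i * q j * (G i j + G j i) ≤ 0 := by
      apply Finset.sum_nonpos; intro i _
      apply Finset.sum_nonpos; intro j _
      exact hterm i j
    linarith
  by_cases hdisj : Disjoint Cs Kn
  · exfalso
    obtain ⟨f, c₁, c₂, hf1, hc, hf2⟩ :=
      geometric_hahn_banach_compact_closed (s := Cs) (t := Kn)
        ((convex_stdSimplex ℝ ι).linear_image L)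
        ((isCompact_stdSimplex ℝ ι).image L.continuous_of_finiteDimensional)
        (convex_pi (fun i _ => convex_Iic 0))
        (isClosed_set_pi (fun i _ => isClosed_Iic))
        hdisj
    have h0 : c₂ < 0 := by
      have := hf2 0 (by intro i _; simp)
      simpa using this
    set p : ι → ℝ := fun i => f (Pi.single i 1 : ι → ℝ) with hp
    have hfy : ∀ y : ι → ℝ, f y = ∑ i, y i * p i := by
      intro y
      have hyrep : y = ∑ i, y i • (Pi.single i (1:ℝ) : ι → ℝ) := by
        funext j
        simp [Finset.sum_apply, Pi.single_apply]
        rw [Finset.sum_eq_single j (fun b _ hb => if_neg (Ne.symm hb)) (by simp)]; exact (if_pos rfl).symm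
      calc f y = f (∑ i, y i • (Pi.single i (1:ℝ) : ι → ℝ)) := by rw [← hyrep]
        _ = ∑ i, y i * p i := by
            rw [map_sum]
            congr 1; funext i
            rw [map_smul]; rfl
    have hple : ∀ i, p i ≤ 0 := by
      intro i
      by_contra hpi
      push_neg at hpi
      set t : ℝ := (-c₂ + 1) / p i with ht
      have htpos : 0 ≤ t := div_nonneg (by linarith) (le_of_lt hpi)
      have hyK : (-t) • (Pi.single i (1:ℝ) : ι → ℝ) ∈ Kn := by
        intro j _
        simp only [Pi.smul_apply, Pi.single_apply, smul_eq_mul, Set.mem_Iic]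
        by_cases hji : j = i
        · simp only [hji, if_true, mul_one]
          nlinarith
        · simp [hji]
      have := hf2 _ hyK
      rw [map_smul] at this
      have hfs : f (Pi.single i 1) = p i := rfl
      have : c₂ < -t * p i := by simpa [smul_eq_mul, hfs] using this
      have htp : t * p i = -c₂ + 1 := by
        rw [ht, div_mul_cancel₀ _ (ne_of_gt hpi)]
      nlinarith
    set q : ι → ℝ := fun i => -p i with hq
    have hqnn : ∀ i, 0 ≤ q i := fun i => by simp [hq]; exact hple i
    set sq : ℝ := ∑ i, q i with hsq
    have hsq0 : 0 ≤ sq := Finset.sum_nonneg (fun i _ => hqnn i)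
    -- produce an element of the simplex and evaluate
    have key : ∀ s : ι → ℝ, s ∈ stdSimplex ℝ ι → f (L s) < c₂ := by
      intro s hs
      exact lt_trans (hf1 _ ⟨s, hs, rfl⟩) hc
    rcases eq_or_lt_of_le hsq0 with hsqz | hsqpos
    · -- all p i = 0, so f (L s) = 0 for s in simplex, contradiction with < c₂ < 0
      have hqz : ∀ i, q i = 0 := by
        intro i
        have : ∑ i, q i = 0 := hsqz.symm
        exact (Finset.sum_eq_zero_iff_of_nonneg (fun i _ => hqnn i)).mp this i (Finset.mem_univ i)
      obtain ⟨i₀⟩ := hane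
      have hs₀ : Pi.single i₀ (1:ℝ) ∈ stdSimplex ℝ ι := by
        constructor
        · intro j; simp [Pi.single_apply]; positivity
        · simp [Pi.single_apply]
          rw [Finset.sum_eq_single i₀ (fun b _ hb => if_neg hb) (by simp)]; exact if_pos rfl
      have := key _ hs₀
      rw [hfy] at this
      have hz : ∑ i, (L (Pi.single i₀ 1)) i * p i = 0 := by
        apply Finset.sum_eq_zero; intro i _
        have : p i = 0 := by have := hqz i; simp [hq] at this; linarith
        rw [this, mul_zero]
      rw [hz] at this; linarith
    · set s : ι → ℝ := fun i => q i / sq with hs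
      have hsmem : s ∈ stdSimplex ℝ ι := by
        constructor
        · intro j; exact div_nonneg (hqnn j) (le_of_lt hsqpos)
        · rw [← Finset.sum_div]; field_simp; rfl
      have := key s hsmem
      rw [hfy] at this
      have hcalc : ∑ i, (L s) i * p i = -(sq⁻¹ * ∑ i, ∑ j, q i * q j * G i j) := by
        rw [Finset.mul_sum, ← Finset.sum_neg_distrib]
        apply Finset.sum_congr rfl
        intro i _
        rw [Finset.mul_sum, ← Finset.sum_neg_distrib]
        have hLi : (L s) i = ∑ j, s j * G i j := rfl
        rw [hLi, Finset.sum_mul]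
        apply Finset.sum_congr rfl
        intro j _
        have hpq : p i = -q i := by simp [hq]
        rw [hpq]
        have hsj : s j = q j * sq⁻¹ := by rw [hs]; ring
        rw [hsj]; ring
      rw [hcalc] at this
      have hqd := quad q hqnn
      have hinv : 0 ≤ sq⁻¹ := inv_nonneg.mpr hsq0
      nlinarith
  · rw [Set.not_disjoint_iff] at hdisj
    obtain ⟨y, ⟨s, hs, hys⟩, hyK⟩ := hdisj
    refine ⟨∑ j, s j • (j.1 : EuclideanSpace ℝ (Fin D)), ?_, ?_⟩
    · exact hSc.sum_mem (fun j _ => hs.1 j) hs.2 (fun j _ => hu j.2)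
    · intro a ha
      have hGa : ∑ j, s j * G ⟨a, ha⟩ j ≤ 0 := by
        have h1 := hyK ⟨a, ha⟩ (Set.mem_univ _)
        rw [← hys] at h1; exact h1
      have hinner : ⟪M a, (∑ j, s j • (j.1 : EuclideanSpace ℝ (Fin D))) - a⟫
          = ∑ j, s j * G ⟨a, ha⟩ j := by
        rw [inner_sub_right, inner_sum]
        have h2 : ⟪M a, a⟫ = ∑ j : ι, s j * ⟪M a, a⟫ := by
          rw [← Finset.sum_mul, hs.2, one_mul]
        rw [h2, ← Finset.sum_sub_distrib]
        congr 1; funext j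
        rw [real_inner_smul_right]
        simp only [hG, inner_sub_right]
        ring
      have h3 : ⟪M a, (∑ j, s j • (j.1 : EuclideanSpace ℝ (Fin D))) - a⟫ ≤ 0 :=
        hinner ▸ hGa
      have h4 : a - (∑ j, s j • (j.1 : EuclideanSpace ℝ (Fin D)))
          = -((∑ j, s j • (j.1 : EuclideanSpace ℝ (Fin D))) - a) := (neg_sub _ _).symm
      rw [h4, inner_neg_right]
      linarith

/-- Hartman–Stampacchia for continuous monotone maps on nonempty compact convex sets. -/
lemma exists_VI {S : Set (EuclideanSpace ℝ (Fin D))} (hScomp : IsCompact S)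
    (hSconv : Convex ℝ S) (hSne : S.Nonempty)
    (M : EuclideanSpace ℝ (Fin D) → EuclideanSpace ℝ (Fin D)) (hM : Continuous M)
    (hmono : ∀ x y, 0 ≤ ⟪M x - M y, x - y⟫) :
    ∃ x ∈ S, ∀ a ∈ S, 0 ≤ ⟪M x, a - x⟫ := by
  classical
  set t : ↥S → Set (EuclideanSpace ℝ (Fin D)) :=
    fun a => {x | 0 ≤ ⟪M a.1, a.1 - x⟫} with ht
  have htc : ∀ a : ↥S, IsClosed (t a) := by
    intro a
    have : Continuous (fun x => ⟪M a.1, a.1 - x⟫) :=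
      Continuous.inner continuous_const (continuous_const.sub continuous_id)
    exact isClosed_le continuous_const this
  have hfip : ∀ u : Finset ↥S, (S ∩ ⋂ i ∈ u, t i).Nonempty := by
    intro u
    obtain ⟨x, hxS, hx⟩ := finite_minty hSconv hSne M hmono
      (u.image Subtype.val)
      (by intro a ha; simp only [coe_image, Set.mem_image] at ha
          obtain ⟨b, _, rfl⟩ := ha; exact b.2)
    refine ⟨x, hxS, ?_⟩
    simp only [Set.mem_iInter]
    intro i hi
    exact hx i.1 (Finset.mem_image_of_mem _ hi)
  obtain ⟨x, hxS, hx⟩ := hScomp.inter_iInter_nonempty t htc hfip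
  simp only [Set.mem_iInter] at hx
  -- x is a Minty solution; convert to a Stampacchia solution
  refine ⟨x, hxS, ?_⟩
  intro a ha
  have hseg : ∀ τ : ℝ, 0 < τ → τ ≤ 1 → 0 ≤ ⟪M (x + τ • (a - x)), a - x⟫ := by
    intro τ hτ0 hτ1
    have hbS : x + τ • (a - x) ∈ S := by
      have := hSconv hxS ha (by linarith : (0:ℝ) ≤ 1 - τ) (le_of_lt hτ0) (by ring)
      convert this using 1
      module
    have hminty := hx ⟨_, hbS⟩
    simp only [ht, Set.mem_setOf_eq] at hminty
    have heq : (x + τ • (a - x)) - x = τ • (a - x) := by module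
    rw [heq, real_inner_smul_right] at hminty
    exact nonneg_of_mul_nonneg_right hminty hτ0
  have hlim : Filter.Tendsto (fun k : ℕ => ⟪M (x + (1/(k+1) : ℝ) • (a - x)), a - x⟫)
      Filter.atTop (nhds ⟪M x, a - x⟫) := by
    have h1 : Filter.Tendsto (fun k : ℕ => (1/(k+1) : ℝ)) Filter.atTop (nhds 0) :=
      tendsto_one_div_add_atTop_nhds_zero_nat
    have h2 : Filter.Tendsto (fun k : ℕ => x + (1/(k+1) : ℝ) • (a - x))
        Filter.atTop (nhds x) := by
      have := (h1.smul_const (a - x)).const_add x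
      simpa using this
    exact ((hM.tendsto x).comp h2).inner tendsto_const_nhds
  refine le_of_tendsto_of_tendsto' tendsto_const_nhds hlim ?_
  intro k
  have hk0 : (0:ℝ) < 1/(k+1) := by positivity
  have hk1 : (1/(k+1) : ℝ) ≤ 1 := by
    rw [div_le_one (by positivity)]
    simp
  exact hseg _ hk0 hk1

/-- The set `P + {nonneg combinations of g over J}`. -/
def coneSum (P : Set (EuclideanSpace ℝ (Fin D))) (g : Fin n → EuclideanSpace ℝ (Fin D))
    (J : Finset (Fin n)) : Set (EuclideanSpace ℝ (Fin D)) :=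
  {z | ∃ p ∈ P, ∃ μ : Fin n → ℝ, (∀ j, 0 ≤ μ j) ∧ z = p + ∑ j ∈ J, μ j • g j}

lemma coneSum_mono (P : Set (EuclideanSpace ℝ (Fin D))) (g : Fin n → EuclideanSpace ℝ (Fin D))
    {J J' : Finset (Fin n)} (h : J' ⊆ J) : coneSum P g J' ⊆ coneSum P g J := by
  rintro z ⟨p, hp, μ, hμ, rfl⟩
  classical
  refine ⟨p, hp, fun j => if j ∈ J' then μ j else 0, fun j => by by_cases h : j ∈ J' <;> simp [h, hμ j], ?_⟩
  congr 1
  rw [← Finset.sum_subset h]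
  · exact Finset.sum_congr rfl (fun j hj => by simp [hj])
  · intro j _ hj; simp [hj]

lemma coneSum_closed (P : Set (EuclideanSpace ℝ (Fin D))) (hPc : IsClosed P)
    (hPadd : ∀ p q, p ∈ P → q ∈ P → p + q ∈ P)
    (hPsmul : ∀ (c : ℝ) p, 0 ≤ c → p ∈ P → c • p ∈ P)
    (g : Fin n → EuclideanSpace ℝ (Fin D))
    (HL : ∀ (J : Finset (Fin n)) (μ : Fin n → ℝ), (∀ j, 0 ≤ μ j) →
      -(∑ j ∈ J, μ j • g j) ∈ P → (∑ j ∈ J, μ j • g j) ∈ P)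
    (J : Finset (Fin n)) : closure (coneSum P g J) ⊆ coneSum P g J := by
  classical
  induction J using Finset.strongInduction with
  | _ J IH => ?_
  intro v hv
  rcases J.eq_empty_or_nonempty with rfl | hJne
  · -- coneSum P g ∅ = P
    have he : coneSum P g (∅ : Finset (Fin n)) = P := by
      ext z
      constructor
      · rintro ⟨p, hp, μ, hμ, rfl⟩; simpa using hp
      · intro hz; exact ⟨z, hz, 0, fun j => le_refl 0, by simp⟩
    rw [he] at hv ⊢
    exact hPc.closure_subset hv
  obtain ⟨z, hzmem, hzlim⟩ := mem_closure_iff_seq_limit.mp hv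
  choose p hpP μ hμnn hzeq using hzmem
  set U : Ultrafilter ℕ := Ultrafilter.of Filter.atTop with hU
  have hUle : (U : Filter ℕ) ≤ Filter.atTop := Ultrafilter.of_le _
  have hzlimU : Filter.Tendsto z U (nhds v) := hzlim.mono_left hUle
  set t : ℕ → ℝ := fun i => ∑ j ∈ J, μ i j with htdef
  have htnn : ∀ i, 0 ≤ t i := fun i => Finset.sum_nonneg (fun j _ => hμnn i j)
  have hμle : ∀ i, ∀ j ∈ J, μ i j ≤ t i := by
    intro i j hj
    exact Finset.single_le_sum (fun j _ => hμnn i j) hj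
  by_cases hbdd : ∃ B : ℝ, {i | t i ≤ B} ∈ U
  · -- bounded case
    obtain ⟨B, hB⟩ := hbdd
    set m : ℕ → (Fin n → ℝ) := fun i j => if j ∈ J then μ i j else 0 with hm
    have hmbox : {i | m i ∈ Set.univ.pi fun _ : Fin n => Set.Icc (0:ℝ) B} ∈ U := by
      filter_upwards [hB] with i hi
      intro j _
      by_cases hj : j ∈ J
      · refine ⟨by simp [hm, hj, hμnn i j], ?_⟩
        simp only [hm, hj, if_true]
        exact le_trans (hμle i j hj) hi
      · refine ⟨by simp [hm, hj], ?_⟩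
        simp only [hm, hj, if_false]
        exact le_trans (htnn i) hi
  -- get a limit of m along U in the compact box
    obtain ⟨μhat, hμhatbox, hμhatlim⟩ :=
      (isCompact_univ_pi (fun _ : Fin n => isCompact_Icc)).ultrafilter_le_nhds'
        (U.map m) (by exact hmbox)
    have hmlim : Filter.Tendsto m U (nhds μhat) := hμhatlim
    have hqlim : Filter.Tendsto (fun i => ∑ j ∈ J, m i j • g j) U
        (nhds (∑ j ∈ J, μhat j • g j)) := by
      apply tendsto_finset_sum
      intro j _
      exact (((continuous_apply j).tendsto μhat).comp hmlim).smul_const (g j)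
    have hqeq : ∀ i, ∑ j ∈ J, m i j • g j = ∑ j ∈ J, μ i j • g j := by
      intro i
      exact Finset.sum_congr rfl (fun j hj => by simp [hm, hj])
    have hplim : Filter.Tendsto (fun i => z i - ∑ j ∈ J, m i j • g j) U
        (nhds (v - ∑ j ∈ J, μhat j • g j)) := hzlimU.sub hqlim
    have hpmem : v - ∑ j ∈ J, μhat j • g j ∈ P := by
      refine hPc.mem_of_tendsto hplim (Filter.Eventually.of_forall (fun i => ?_))
      rw [hqeq i]
      have := hzeq i
      have : z i - ∑ j ∈ J, μ i j • g j = p i := by rw [this]; abel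
      rw [this]; exact hpP i
    refine ⟨_, hpmem, μhat, fun j => (hμhatbox j (Set.mem_univ j)).1, by abel⟩
  · -- unbounded case
    push_neg at hbdd
    have htU : ∀ B : ℝ, {i | B < t i} ∈ U := by
      intro B
      have h1 := hbdd B
      rw [← Ultrafilter.compl_mem_iff_notMem, Set.compl_setOf] at h1
      convert h1 using 2
      ext i; simp
    have httop : Filter.Tendsto t U Filter.atTop := by
      rw [Filter.tendsto_atTop]
      intro B
      have := htU B
      filter_upwards [this] with i hi
      exact le_of_lt hi
    have htpos : {i | 0 < t i} ∈ U := htU 0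
    set σ : ℕ → (Fin n → ℝ) := fun i j => if j ∈ J then μ i j / t i else 0 with hσ
    have hσbox : {i | σ i ∈ Set.univ.pi fun _ : Fin n => Set.Icc (0:ℝ) 1} ∈ U := by
      filter_upwards [htpos] with i hi
      intro j _
      by_cases hj : j ∈ J
      · refine ⟨by simp only [hσ, hj, if_true]; exact div_nonneg (hμnn i j) (le_of_lt hi), ?_⟩
        simp only [hσ, hj, if_true]
        rw [div_le_one hi]
        exact hμle i j hj
      · simp [hσ, hj]
    obtain ⟨σhat, hσhatbox, hσhatlim⟩ :=
      (isCompact_univ_pi (fun _ : Fin n => isCompact_Icc)).ultrafilter_le_nhds'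
        (U.map σ) (by exact hσbox)
    have hσlim : Filter.Tendsto σ U (nhds σhat) := hσhatlim
    have hσhatnn : ∀ j, 0 ≤ σhat j := fun j => (hσhatbox j (Set.mem_univ j)).1
    -- the sum of σhat over J is 1
    have hσsum1 : ∑ j ∈ J, σhat j = 1 := by
      have hsumlim : Filter.Tendsto (fun i => ∑ j ∈ J, σ i j) U (nhds (∑ j ∈ J, σhat j)) := by
        apply tendsto_finset_sum
        intro j _
        exact ((continuous_apply j).tendsto σhat).comp hσlim
      have hsumev : Filter.Tendsto (fun i => ∑ j ∈ J, σ i j) U (nhds 1) := by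
        apply Filter.Tendsto.congr' _ tendsto_const_nhds
        filter_upwards [htpos] with i hi
        have : ∑ j ∈ J, σ i j = (∑ j ∈ J, μ i j) / t i := by
          rw [Finset.sum_div]
          exact Finset.sum_congr rfl (fun j hj => by simp [hσ, hj])
        rw [this, htdef]
        exact (div_self (ne_of_gt hi)).symm
      exact tendsto_nhds_unique hsumlim hsumev
    set qhat : EuclideanSpace ℝ (Fin D) := ∑ j ∈ J, σhat j • g j with hqhat
    -- (t i)⁻¹ • p i tends to -qhat
    have hinvlim : Filter.Tendsto (fun i => (t i)⁻¹) U (nhds 0) :=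
      Filter.Tendsto.inv_tendsto_atTop httop
    have hzbd : Filter.Tendsto (fun i => (t i)⁻¹ • z i) U (nhds 0) := by
      have := hinvlim.smul hzlimU
      simpa using this
    have hqilim : Filter.Tendsto (fun i => ∑ j ∈ J, σ i j • g j) U (nhds qhat) := by
      apply tendsto_finset_sum
      intro j _
      exact (((continuous_apply j).tendsto σhat).comp hσlim).smul_const (g j)
    have hplim : Filter.Tendsto (fun i => (t i)⁻¹ • z i - ∑ j ∈ J, σ i j • g j) U
        (nhds (0 - qhat)) := hzbd.sub hqilim
    have hmqP : -qhat ∈ P := by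
      have h0q : (0:EuclideanSpace ℝ (Fin D)) - qhat = -qhat := by abel
      rw [← h0q]
      refine hPc.mem_of_tendsto hplim ?_
      filter_upwards [htpos] with i hi
      have hexp : (t i)⁻¹ • z i - ∑ j ∈ J, σ i j • g j = (t i)⁻¹ • p i := by
        rw [hzeq i, smul_add, smul_sum]
        have : ∀ j ∈ J, (t i)⁻¹ • (μ i j • g j) = σ i j • g j := by
          intro j hj
          rw [smul_smul]
          simp only [hσ, hj, if_true]
          rw [div_eq_inv_mul]
        rw [Finset.sum_congr rfl this]
        abel
      rw [hexp]
      exact hPsmul _ _ (inv_nonneg.mpr (le_of_lt hi)) (hpP i)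
    have hqP : qhat ∈ P := HL J σhat hσhatnn hmqP
    -- pick an index with positive weight, minimal ratio, constant along U
    have hex : ∃ j ∈ J, 0 < σhat j := by
      by_contra hno
      push_neg at hno
      have : ∑ j ∈ J, σhat j = 0 :=
        le_antisymm (Finset.sum_nonpos (fun j hj => hno j hj)) (Finset.sum_nonneg (fun j _ => hσhatnn j))
      rw [hσsum1] at this; norm_num at this
    set J' : Finset (Fin n) := J.filter (fun j => 0 < σhat j) with hJ'
    have hJ'ne : J'.Nonempty := by
      obtain ⟨j, hj, hjpos⟩ := hex
      exact ⟨j, Finset.mem_filter.mpr ⟨hj, hjpos⟩⟩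
    have hminex : ∀ i : ℕ, ∃ j₀ ∈ J', ∀ j ∈ J', μ i j₀ / σhat j₀ ≤ μ i j / σhat j :=
      fun i => J'.exists_min_image (fun j => μ i j / σhat j) hJ'ne
    choose ji hjiJ' hjimin using hminex
    have hpig : ∃ j₁ ∈ J', {i | ji i = j₁} ∈ U := by
      by_contra hno
      push_neg at hno
      have hcompl : ∀ j ∈ J', {i | ji i = j}ᶜ ∈ U := by
        intro j hj
        rw [Ultrafilter.compl_mem_iff_notMem]
        exact hno j hj
      have hinter : (⋂ j ∈ (J' : Set (Fin n)), {i | ji i = j}ᶜ) ∈ U :=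
        (Filter.biInter_mem (J'.finite_toSet)).mpr hcompl
      have : (⋂ j ∈ (J' : Set (Fin n)), {i | ji i = j}ᶜ) = ∅ := by
        ext i
        simp only [Set.mem_iInter, Set.mem_compl_iff, Set.mem_setOf_eq, Set.mem_empty_iff_false,
          iff_false, not_forall]
        exact ⟨ji i, hjiJ' i, by simp⟩
      rw [this] at hinter
      exact Filter.empty_notMem (U : Filter ℕ) hinter
    obtain ⟨j₁, hj₁J', hj₁U⟩ := hpig
    have hj₁J : j₁ ∈ J := (Finset.mem_filter.mp hj₁J').1
    have hσj₁ : 0 < σhat j₁ := (Finset.mem_filter.mp hj₁J').2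
    set c : ℕ → ℝ := fun i => μ i j₁ / σhat j₁ with hc
    have hcnn : ∀ i, 0 ≤ c i := fun i => div_nonneg (hμnn i j₁) (le_of_lt hσj₁)
    -- on the U-set, z i lies in coneSum over J.erase j₁
    have hzmem' : {i | z i ∈ coneSum P g (J.erase j₁)} ∈ U := by
      filter_upwards [hj₁U] with i hi
      set ν : Fin n → ℝ := fun j => if j ∈ J then μ i j - c i * σhat j else 0 with hν
      have hνnn : ∀ j ∈ J, 0 ≤ ν j := by
        intro j hj
        simp only [hν, hj, if_true]
        by_cases hjpos : 0 < σhat j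
        · have hjJ' : j ∈ J' := Finset.mem_filter.mpr ⟨hj, hjpos⟩
          have hmin := hjimin i j hjJ'
          rw [hi] at hmin
          rw [sub_nonneg, hc]
          calc μ i j₁ / σhat j₁ * σhat j ≤ μ i j / σhat j * σhat j :=
                mul_le_mul_of_nonneg_right hmin (le_of_lt hjpos)
            _ = μ i j := by field_simp
        · have hj0 : σhat j = 0 := le_antisymm (not_lt.mp hjpos) (hσhatnn j)
          simp [hj0, hμnn i j]
      have hνj₁ : ν j₁ = 0 := by
        simp only [hν, hj₁J, if_true, hc]
        field_simp
        ring
      refine ⟨p i + c i • qhat, hPadd _ _ (hpP i) (hPsmul _ _ (hcnn i) hqP), ν, ?_, ?_⟩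
      · intro j
        by_cases hj : j ∈ J
        · exact hνnn j hj
        · simp [hν, hj]
      · rw [hzeq i]
        have h1 : ∑ j ∈ J.erase j₁, ν j • g j = ∑ j ∈ J, ν j • g j :=
          Finset.sum_erase _ (by rw [hνj₁, zero_smul])
        have h2 : ∑ j ∈ J, ν j • g j
            = ∑ j ∈ J, μ i j • g j - ∑ j ∈ J, (c i * σhat j) • g j := by
          rw [← Finset.sum_sub_distrib]
          apply Finset.sum_congr rfl
          intro j hj
          simp only [hν, hj, if_true]
          rw [sub_smul]
        have h3 : c i • qhat = ∑ j ∈ J, (c i * σhat j) • g j := by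
          rw [hqhat, Finset.smul_sum]
          exact Finset.sum_congr rfl (fun j _ => smul_smul _ _ _)
        rw [h1, h2, h3]
        abel
    have hvmem : v ∈ closure (coneSum P g (J.erase j₁)) :=
      mem_closure_of_tendsto hzlimU hzmem'
    have := IH (J.erase j₁) (Finset.erase_ssubset hj₁J) hvmem
    exact coneSum_mono P g (Finset.erase_subset j₁ J) this

lemma mulVecE_apply (K : Matrix (Fin n) (Fin D) ℝ) (x : EuclideanSpace ℝ (Fin D)) (j : Fin n) :
    mulVecE K x j = ⟪((WithLp.equiv 2 _).symm (K j) : EuclideanSpace ℝ (Fin D)), x⟫ := by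
  simp only [mulVecE, PiLp.inner_apply, RCLike.inner_apply, WithLp.equiv_symm_apply, PiLp.toLp_apply,
    Matrix.mulVec, dotProduct]
  simp [conj_trivial, mul_comm]

lemma mulVecE_transpose (K : Matrix (Fin n) (Fin D) ℝ) (w : EuclideanSpace ℝ (Fin n)) :
    mulVecE K.transpose w
      = ∑ j, w j • ((WithLp.equiv 2 _).symm (K j) : EuclideanSpace ℝ (Fin D)) := by
  ext i
  simp only [mulVecE, WithLp.equiv_symm_apply, PiLp.toLp_apply, Matrix.mulVec, dotProduct,
    Matrix.transpose_apply]
  rw [WithLp.ofLp_sum, Finset.sum_apply]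
  apply Finset.sum_congr rfl
  intro j _
  simp [WithLp.equiv_symm_apply, PiLp.toLp_apply, mul_comm]

set_option maxHeartbeats 2000000 in
/-- existence of a solution of `VI(W, A × ℝⁿ₊)` under compactness,
convexity, continuity, strong monotonicity and relative-interior feasibility. -/
theorem stmt_3 (D n : ℕ)
    (A : Set (EuclideanSpace ℝ (Fin D))) (hAne : A.Nonempty)
    (hAcomp : IsCompact A) (hAconv : Convex ℝ A)
    (K : Matrix (Fin n) (Fin D) ℝ) (l : EuclideanSpace ℝ (Fin n))
    (M : EuclideanSpace ℝ (Fin D) → EuclideanSpace ℝ (Fin D)) (hM : Continuous M)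
    (ν : ℝ) (hν : 0 < ν)
    (hmono : ∀ a₁ a₂ : EuclideanSpace ℝ (Fin D), ν * ‖a₁ - a₂‖ ^ 2 ≤ ⟪M a₁ - M a₂, a₁ - a₂⟫)
    (ahat : EuclideanSpace ℝ (Fin D)) (hahat : ahat ∈ intrinsicInterior ℝ A)
    (hahatC : ∀ j, mulVecE K ahat j ≤ l j) :
    ∃ astar : EuclideanSpace ℝ (Fin D), ∃ lstar : EuclideanSpace ℝ (Fin n),
      astar ∈ A ∧ (∀ j, 0 ≤ lstar j) ∧
      (∀ a ∈ A, ∀ lam : EuclideanSpace ℝ (Fin n), (∀ j, 0 ≤ lam j) →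
        0 ≤ ⟪M astar + mulVecE K.transpose lstar, a - astar⟫
            + ⟪l - mulVecE K astar, lam - lstar⟫) := by
  classical
  set k : Fin n → EuclideanSpace ℝ (Fin D) := fun j => (WithLp.equiv 2 _).symm (K j) with hk
  have hmulk : ∀ (x : EuclideanSpace ℝ (Fin D)) (j : Fin n), mulVecE K x j = ⟪k j, x⟫ :=
    fun x j => mulVecE_apply K x j
  have hmono' : ∀ x y : EuclideanSpace ℝ (Fin D), 0 ≤ ⟪M x - M y, x - y⟫ := by
    intro x y
    refine le_trans ?_ (hmono x y)
    positivity
  set Cs : Set (EuclideanSpace ℝ (Fin D)) := {x | ∀ j, ⟪k j, x⟫ ≤ l j} with hCs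
  set S : Set (EuclideanSpace ℝ (Fin D)) := A ∩ Cs with hS
  have hCsclosed : IsClosed Cs := by
    have : Cs = ⋂ j, {x : EuclideanSpace ℝ (Fin D) | ⟪k j, x⟫ ≤ l j} := by
      ext x; simp [hCs, Set.mem_iInter]
    rw [this]
    exact isClosed_iInter (fun j => isClosed_le (Continuous.inner continuous_const continuous_id)
      continuous_const)
  have hCsconv : Convex ℝ Cs := by
    have : Cs = ⋂ j, {x : EuclideanSpace ℝ (Fin D) | ⟪k j, x⟫ ≤ l j} := by
      ext x; simp [hCs, Set.mem_iInter]
    rw [this]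
    exact convex_iInter (fun j => convex_halfSpace_le
      ⟨fun x y => inner_add_right _ _ _, fun c x => real_inner_smul_right _ _ _⟩ (l j))
  have hahatA : ahat ∈ A := intrinsicInterior_subset hahat
  have hahatS : ahat ∈ S := ⟨hahatA, fun j => by rw [← hmulk]; exact hahatC j⟩
  have hScomp : IsCompact S := hAcomp.inter_right hCsclosed
  have hSconv : Convex ℝ S := hAconv.inter hCsconv
  obtain ⟨astar, hastarS, hVI⟩ := exists_VI hScomp hSconv ⟨ahat, hahatS⟩ M hM hmono'
  obtain ⟨hastarA, hastarC⟩ := hastarS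
  set v : EuclideanSpace ℝ (Fin D) := M astar with hv
  set P : Set (EuclideanSpace ℝ (Fin D)) := {u | ∀ a ∈ A, 0 ≤ ⟪u, a - astar⟫} with hP
  have hPc : IsClosed P := by
    have : P = ⋂ a ∈ A, {u : EuclideanSpace ℝ (Fin D) | 0 ≤ ⟪u, a - astar⟫} := by
      ext u; simp [hP, Set.mem_iInter]
    rw [this]
    exact isClosed_biInter (fun a ha => isClosed_le continuous_const
      (Continuous.inner continuous_id continuous_const))
  have hPadd : ∀ p q, p ∈ P → q ∈ P → p + q ∈ P := by
    intro p q hp hq a ha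
    rw [inner_add_left]
    exact add_nonneg (hp a ha) (hq a ha)
  have hPsmul : ∀ (c : ℝ) p, 0 ≤ c → p ∈ P → c • p ∈ P := by
    intro c p hc hp a ha
    rw [real_inner_smul_left]
    exact mul_nonneg hc (hp a ha)
  have hP0 : (0:EuclideanSpace ℝ (Fin D)) ∈ P := by intro a ha; simp
  set J₀ : Finset (Fin n) := Finset.univ.filter (fun j => ⟪k j, astar⟫ = l j) with hJ₀
  set g : Fin n → EuclideanSpace ℝ (Fin D) := fun j => if j ∈ J₀ then -(k j) else 0 with hg
  set V₀ : Submodule ℝ (EuclideanSpace ℝ (Fin D)) := (affineSpan ℝ A).direction with hV₀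
  have hrelint : ∃ r : ℝ, 0 < r ∧
      ∀ w : EuclideanSpace ℝ (Fin D), w ∈ V₀ → ‖w‖ < r → ahat + w ∈ A := by
    rw [mem_intrinsicInterior] at hahat
    obtain ⟨y, hy, hyeq⟩ := hahat
    rw [mem_interior_iff_mem_nhds, Metric.mem_nhds_iff] at hy
    obtain ⟨ε, hε, hball⟩ := hy
    refine ⟨ε, hε, ?_⟩
    intro w hw hwr
    have hahatspan : ahat ∈ affineSpan ℝ A := subset_affineSpan ℝ A hahatA
    have hmem : ahat + w ∈ affineSpan ℝ A := by
      have := AffineSubspace.vadd_mem_of_mem_direction (s := affineSpan ℝ A) hw hahatspan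
      simpa [add_comm] using this
    set z : (affineSpan ℝ A) := ⟨ahat + w, hmem⟩ with hz
    have hzball : z ∈ Metric.ball y ε := by
      rw [Metric.mem_ball, Subtype.dist_eq, hyeq]
      have : dist (ahat + w) ahat = ‖w‖ := by
        rw [dist_eq_norm]
        simp
      rw [hz]
      simpa [this] using hwr
    exact hball hzball
  set ehat : EuclideanSpace ℝ (Fin D) := ahat - astar with hehat
  have hkehat : ∀ j ∈ J₀, ⟪k j, ehat⟫ ≤ 0 := by
    intro j hj
    have hact : ⟪k j, astar⟫ = l j := (Finset.mem_filter.mp hj).2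
    have := hahatC j
    rw [hmulk ahat j] at this
    rw [hehat, inner_sub_right]
    linarith
  have hPehat : ∀ p ∈ P, 0 ≤ ⟪p, ehat⟫ := fun p hp => hp ahat hahatA
  have HL : ∀ (J : Finset (Fin n)) (μ : Fin n → ℝ), (∀ j, 0 ≤ μ j) →
      -(∑ j ∈ J, μ j • g j) ∈ P → (∑ j ∈ J, μ j • g j) ∈ P := by
    intro J μ hμ hneg
    set q : EuclideanSpace ℝ (Fin D) := ∑ j ∈ J, μ j • g j with hq
    have hgehat : ∀ j, 0 ≤ ⟪g j, ehat⟫ := by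
      intro j
      by_cases hj : j ∈ J₀
      · simp only [hg, hj, if_true, inner_neg_left]
        linarith [hkehat j hj]
      · simp [hg, hj]
    have hqehat0 : ⟪q, ehat⟫ = 0 := by
      have h1 : 0 ≤ ⟪q, ehat⟫ := by
        rw [hq, sum_inner]
        apply Finset.sum_nonneg
        intro j hj
        rw [real_inner_smul_left]
        exact mul_nonneg (hμ j) (hgehat j)
      have h2 := hPehat _ hneg
      rw [inner_neg_left] at h2
      linarith
    obtain ⟨r, hr, hball⟩ := hrelint
    have hqV : ∀ w : EuclideanSpace ℝ (Fin D), w ∈ V₀ → ‖w‖ < r → ⟪q, w⟫ ≤ 0 := by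
      intro w hw hwr
      have hmem : ahat + w ∈ A := hball w hw hwr
      have h3 := hneg (ahat + w) hmem
      have hexp : ahat + w - astar = ehat + w := by rw [hehat]; abel
      rw [hexp, inner_neg_left, inner_add_right] at h3
      linarith [hqehat0]
    have hqV0 : ∀ w : EuclideanSpace ℝ (Fin D), w ∈ V₀ → ⟪q, w⟫ = 0 := by
      intro w hw
      rcases eq_or_ne w 0 with rfl | hw0
      · simp
      · have hnorm : 0 < ‖w‖ := norm_pos_iff.mpr hw0
        set c : ℝ := r / (2 * ‖w‖) with hc
        have hcpos : 0 < c := by positivity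
        have hnormc : ‖c • w‖ < r := by
          rw [norm_smul, Real.norm_eq_abs, abs_of_pos hcpos, hc]
          rw [div_mul_eq_mul_div, mul_comm]
          rw [div_lt_iff₀ (by positivity)]
          nlinarith
        have h1 := hqV (c • w) (V₀.smul_mem c hw) hnormc
        have h2' : ‖c • (-w)‖ < r := by
          rw [norm_smul] at hnormc ⊢
          simpa using hnormc
        have h2 := hqV (c • (-w)) (V₀.smul_mem c (V₀.neg_mem hw)) h2'
        rw [real_inner_smul_right] at h1 h2
        rw [inner_neg_right] at h2
        nlinarith
    intro a ha
    have haV : a - astar ∈ V₀ := by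
      have := AffineSubspace.vsub_mem_direction (subset_affineSpan ℝ A ha)
        (subset_affineSpan ℝ A hastarA)
      exact this
    rw [hqV0 _ haV]
  have hclaim : v ∈ coneSum P g J₀ := by
    by_contra hnot
    have hQclosed : IsClosed (coneSum P g J₀) :=
      isClosed_of_closure_subset (coneSum_closed P hPc hPadd hPsmul g HL J₀)
    have hQzero : (0 : EuclideanSpace ℝ (Fin D)) ∈ coneSum P g J₀ :=
      ⟨0, hP0, 0, fun j => le_refl 0, by simp⟩
    have hQsmul : ∀ (c : ℝ), 0 ≤ c → ∀ z ∈ coneSum P g J₀, c • z ∈ coneSum P g J₀ := by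
      rintro c hc z ⟨p1, hp1, μ1, hμ1, rfl⟩
      refine ⟨c • p1, hPsmul c p1 hc hp1, fun j => c * μ1 j,
        fun j => mul_nonneg hc (hμ1 j), ?_⟩
      rw [smul_add, Finset.smul_sum]
      congr 1
      exact Finset.sum_congr rfl fun j _ => by rw [smul_smul]
    have hQconv : Convex ℝ (coneSum P g J₀) := by
      rintro x ⟨p1, hp1, μ1, hμ1, rfl⟩ y ⟨p2, hp2, μ2, hμ2, rfl⟩ α β hα hβ hαβ
      refine ⟨α • p1 + β • p2, hPadd _ _ (hPsmul α p1 hα hp1) (hPsmul β p2 hβ hp2),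
        fun j => α * μ1 j + β * μ2 j,
        fun j => add_nonneg (mul_nonneg hα (hμ1 j)) (mul_nonneg hβ (hμ2 j)), ?_⟩
      have hSg : ∑ j ∈ J₀, (α * μ1 j + β * μ2 j) • g j
          = α • ∑ j ∈ J₀, μ1 j • g j + β • ∑ j ∈ J₀, μ2 j • g j := by
        rw [Finset.smul_sum, Finset.smul_sum, ← Finset.sum_add_distrib]
        exact Finset.sum_congr rfl fun j _ => by rw [add_smul, smul_smul, smul_smul]
      rw [hSg]
      module
    obtain ⟨f, u, hfv, hfb⟩ := geometric_hahn_banach_point_closed hQconv hQclosed hnot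
    have hu0 : u < 0 := by
      have := hfb 0 hQzero
      simpa using this
    have hfnn : ∀ b ∈ coneSum P g J₀, 0 ≤ f b := by
      intro b hb
      by_contra hfb'
      push_neg at hfb'
      have hcpos : 0 ≤ (u - 1) / (f b) :=
        div_nonneg_iff.mpr (Or.inr ⟨by linarith, le_of_lt hfb'⟩)
      have hcb := hfb _ (hQsmul _ hcpos b hb)
      rw [map_smul, smul_eq_mul, div_mul_cancel₀] at hcb
      · linarith
      · exact ne_of_lt hfb'
    set d : EuclideanSpace ℝ (Fin D) := (InnerProductSpace.toDual ℝ _).symm f with hd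
    have hdf : ∀ y : EuclideanSpace ℝ (Fin D), ⟪d, y⟫ = f y := fun y =>
      InnerProductSpace.toDual_symm_apply
    have hdP : ∀ p' ∈ P, 0 ≤ ⟪d, p'⟫ := by
      intro p' hp'
      rw [hdf]
      exact hfnn p' ⟨p', hp', 0, fun j => le_refl 0, by simp⟩
    have hdg : ∀ j ∈ J₀, 0 ≤ ⟪d, g j⟫ := by
      intro j hj
      rw [hdf]
      refine hfnn (g j) ⟨0, hP0, fun j' => if j' = j then 1 else 0,
        fun j' => by positivity, ?_⟩
      rw [zero_add]
      rw [Finset.sum_eq_single j]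
      · simp
      · intro j' _ hne; simp [hne]
      · intro hjabs; exact absurd hj hjabs
    have hkd : ∀ j ∈ J₀, ⟪k j, d⟫ ≤ 0 := by
      intro j hj
      have h6 := hdg j hj
      rw [hg] at h6
      simp only [hj, if_true, inner_neg_right] at h6
      rw [real_inner_comm]
      linarith
    have hdv : ⟪v, d⟫ < 0 := by
      have h7 := hfv
      rw [← hdf v] at h7
      rw [real_inner_comm]
      linarith
    set CA : Set (EuclideanSpace ℝ (Fin D)) :=
      {y | ∃ c : ℝ, 0 ≤ c ∧ ∃ x ∈ A, y = c • (x - astar)} with hCAdef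
    have hCA0 : (0 : EuclideanSpace ℝ (Fin D)) ∈ CA :=
      ⟨0, le_refl 0, astar, hastarA, by simp⟩
    have hCAsmul : ∀ (c : ℝ), 0 ≤ c → ∀ z ∈ CA, c • z ∈ CA := by
      rintro c hc z ⟨c', hc', x, hx, rfl⟩
      exact ⟨c * c', mul_nonneg hc hc', x, hx, smul_smul c c' _⟩
    have hCAconv : Convex ℝ CA := by
      rintro z₁ ⟨c₁, hc₁, x₁, hx₁, rfl⟩ z₂ ⟨c₂, hc₂, x₂, hx₂, rfl⟩ α β hα hβ hαβ
      rcases eq_or_lt_of_le (show (0:ℝ) ≤ α * c₁ + β * c₂ by positivity) with hz | hpos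
      · have h1 : α * c₁ = 0 := by nlinarith [mul_nonneg hα hc₁, mul_nonneg hβ hc₂]
        have h2 : β * c₂ = 0 := by nlinarith [mul_nonneg hα hc₁, mul_nonneg hβ hc₂]
        refine Set.mem_of_eq_of_mem ?_ hCA0
        rw [smul_smul, smul_smul, h1, h2]
        simp
      · refine ⟨α * c₁ + β * c₂, le_of_lt hpos,
          (α * c₁ / (α * c₁ + β * c₂)) • x₁ + (β * c₂ / (α * c₁ + β * c₂)) • x₂, ?_, ?_⟩
        · exact hAconv hx₁ hx₂ (div_nonneg (by positivity) (le_of_lt hpos))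
            (div_nonneg (by positivity) (le_of_lt hpos))
            (by field_simp)
        · have hne : α * c₁ + β * c₂ ≠ 0 := ne_of_gt hpos
          match_scalars <;> field_simp <;> ring
    have hdCA : d ∈ closure CA := by
      by_contra hdnot
      obtain ⟨h, u', hh1, hh2⟩ :=
        geometric_hahn_banach_point_closed (hCAconv.closure) isClosed_closure hdnot
      have hu'0 : u' < 0 := by
        have := hh2 0 (subset_closure hCA0)
        simpa using this
      have hhnn : ∀ b ∈ CA, 0 ≤ h b := by
        intro b hb
        by_contra hb'
        push_neg at hb'
        have hcpos : 0 ≤ (u' - 1) / (h b) :=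
          div_nonneg_iff.mpr (Or.inr ⟨by linarith, le_of_lt hb'⟩)
        have hcb := hh2 _ (subset_closure (hCAsmul _ hcpos b hb))
        rw [map_smul, smul_eq_mul, div_mul_cancel₀] at hcb
        · linarith
        · exact ne_of_lt hb'
      set wv : EuclideanSpace ℝ (Fin D) := (InnerProductSpace.toDual ℝ _).symm h with hwv
      have hwvf : ∀ y, ⟪wv, y⟫ = h y := fun y => InnerProductSpace.toDual_symm_apply
      have hwvP : wv ∈ P := by
        intro x hx
        rw [hwvf]
        exact hhnn _ ⟨1, zero_le_one, x, hx, (one_smul _ _).symm⟩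
      have h5 := hdP wv hwvP
      rw [real_inner_comm, hwvf d] at h5
      linarith
    have hCAV : CA ⊆ (V₀ : Set (EuclideanSpace ℝ (Fin D))) := by
      rintro z ⟨c, hc, x, hx, rfl⟩
      exact V₀.smul_mem c (AffineSubspace.vsub_mem_direction
        (subset_affineSpan ℝ A hx) (subset_affineSpan ℝ A hastarA))
    have hV₀closed : IsClosed (V₀ : Set (EuclideanSpace ℝ (Fin D))) :=
      V₀.closed_of_finiteDimensional
    have hdV : d ∈ V₀ := by
      have h8 := closure_mono hCAV hdCA
      rwa [hV₀closed.closure_eq] at h8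
    obtain ⟨r, hr, hball⟩ := hrelint
    have hkey : ∀ s : ℝ, 0 < s → s < 1 → 0 ≤ (1 - s) * ⟪v, d⟫ + s * ⟪v, ehat⟫ := by
      intro s hs0 hs1
      have h1s : 0 < 1 - s := by linarith
      have hεpos : 0 < r * s / (1 - s) := by
        apply div_pos _ h1s
        exact mul_pos hr hs0
      obtain ⟨b, hbCA, hdb⟩ := Metric.mem_closure_iff.mp hdCA _ hεpos
      obtain ⟨c, hcnn, x, hxA, rfl⟩ := hbCA
      set w : EuclideanSpace ℝ (Fin D) := ((1 - s)/s) • (d - c • (x - astar)) with hwdef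
      have hxV : x - astar ∈ V₀ := AffineSubspace.vsub_mem_direction
        (subset_affineSpan ℝ A hxA) (subset_affineSpan ℝ A hastarA)
      have hwV : w ∈ V₀ := V₀.smul_mem _ (V₀.sub_mem hdV (V₀.smul_mem c hxV))
      have hwnorm : ‖w‖ < r := by
        rw [hwdef, norm_smul, Real.norm_eq_abs, abs_of_pos (div_pos h1s hs0)]
        have hdist : ‖d - c • (x - astar)‖ < r * s / (1 - s) := by
          rw [← dist_eq_norm]; exact hdb
        have h2 : (1 - s)/s * (r * s / (1 - s)) = r := by
          field_simp
        calc (1 - s)/s * ‖d - c • (x - astar)‖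
            < (1 - s)/s * (r * s / (1 - s)) :=
              mul_lt_mul_of_pos_left hdist (div_pos h1s hs0)
          _ = r := h2
      have hawA : ahat + w ∈ A := hball w hwV hwnorm
      set ds : EuclideanSpace ℝ (Fin D) := (1 - s) • d + s • ehat with hds
      have hevA : ∀ᶠ τ in nhdsWithin (0:ℝ) (Set.Ioi 0), astar + τ • ds ∈ A := by
        have hcont : Filter.Tendsto (fun τ : ℝ => τ * ((1 - s) * c + s))
            (nhdsWithin 0 (Set.Ioi 0)) (nhds (0 * ((1 - s) * c + s))) :=
          ((continuous_id.mul continuous_const).tendsto 0).mono_left nhdsWithin_le_nhds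
        rw [zero_mul] at hcont
        have hev1 : ∀ᶠ τ in nhdsWithin (0:ℝ) (Set.Ioi 0), τ * ((1 - s) * c + s) < 1 :=
          hcont.eventually_lt_const one_pos
        filter_upwards [hev1, self_mem_nhdsWithin] with τ hτ1 hτ0
        rw [Set.mem_Ioi] at hτ0
        have hαnn : 0 ≤ τ * ((1 - s) * c) :=
          mul_nonneg (le_of_lt hτ0) (mul_nonneg (le_of_lt h1s) hcnn)
        have hβnn : 0 ≤ τ * s := mul_nonneg (le_of_lt hτ0) (le_of_lt hs0)
        have hαβ1 : τ * ((1 - s) * c) + τ * s ≤ 1 := by nlinarith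
        have hmem := hAconv.sum_mem (t := (Finset.univ : Finset (Fin 3)))
          (w := ![1 - τ * ((1 - s) * c) - τ * s, τ * ((1 - s) * c), τ * s])
          (z := ![astar, x, ahat + w]) ?_ ?_ ?_
        · have hid : astar + τ • ds
              = ∑ i, (![1 - τ * ((1 - s) * c) - τ * s, τ * ((1 - s) * c), τ * s] i)
                • (![astar, x, ahat + w] i) := by
            rw [Fin.sum_univ_three]
            simp only [Matrix.cons_val_zero, Matrix.cons_val_one, Matrix.head_cons,
              Matrix.cons_val_two, Matrix.tail_cons]
            rw [hds, hwdef, hehat]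
            have hsne : s ≠ 0 := ne_of_gt hs0
            match_scalars <;> field_simp [hsne] <;> try ring
          rw [hid]
          exact hmem
        · intro i _
          fin_cases i
          · show (0:ℝ) ≤ 1 - τ * ((1 - s) * c) - τ * s
            linarith
          · show (0:ℝ) ≤ τ * ((1 - s) * c)
            exact hαnn
          · show (0:ℝ) ≤ τ * s
            exact hβnn
        · rw [Fin.sum_univ_three]
          simp only [Matrix.cons_val_zero, Matrix.cons_val_one, Matrix.head_cons,
            Matrix.cons_val_two, Matrix.tail_cons]
          ring
        · intro i _
          fin_cases i
          · exact hastarA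
          · exact hxA
          · exact hawA
      have hevC : ∀ᶠ τ in nhdsWithin (0:ℝ) (Set.Ioi 0), astar + τ • ds ∈ Cs := by
        have hallj : ∀ j : Fin n, ∀ᶠ τ in nhdsWithin (0:ℝ) (Set.Ioi 0),
            ⟪k j, astar + τ • ds⟫ ≤ l j := by
          intro j
          have hinner : ∀ τ : ℝ, ⟪k j, astar + τ • ds⟫ = ⟪k j, astar⟫ + τ * ⟪k j, ds⟫ := by
            intro τ; rw [inner_add_right, real_inner_smul_right]
          by_cases hj : j ∈ J₀
          · have hact : ⟪k j, astar⟫ = l j := (Finset.mem_filter.mp hj).2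
            have hkds : ⟪k j, ds⟫ ≤ 0 := by
              rw [hds, inner_add_right, real_inner_smul_right, real_inner_smul_right]
              have h1 := hkd j hj
              have h2 := hkehat j hj
              nlinarith
            filter_upwards [self_mem_nhdsWithin] with τ hτ
            rw [Set.mem_Ioi] at hτ
            rw [hinner, hact]
            nlinarith
          · have hlt : ⟪k j, astar⟫ < l j := lt_of_le_of_ne (hastarC j) (by
              intro hEq
              exact hj (Finset.mem_filter.mpr ⟨Finset.mem_univ j, hEq⟩))
            have hcont2 : Filter.Tendsto (fun τ : ℝ => ⟪k j, astar⟫ + τ * ⟪k j, ds⟫)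
                (nhdsWithin 0 (Set.Ioi 0)) (nhds (⟪k j, astar⟫ + 0 * ⟪k j, ds⟫)) :=
              ((continuous_const.add (continuous_id.mul continuous_const)).tendsto 0).mono_left
                nhdsWithin_le_nhds
            rw [zero_mul, add_zero] at hcont2
            filter_upwards [hcont2.eventually_lt_const hlt] with τ hτ
            rw [hinner]
            exact le_of_lt hτ
        exact Filter.eventually_all.mpr hallj
      obtain ⟨τ, ⟨hτA, hτC⟩, hτpos⟩ := ((hevA.and hevC).and self_mem_nhdsWithin).exists
      have hτpos' : 0 < τ := hτpos
      have hVIτ := hVI _ ⟨hτA, hτC⟩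
      have hsub : astar + τ • ds - astar = τ • ds := by abel
      rw [hsub, real_inner_smul_right] at hVIτ
      have h0ds : 0 ≤ ⟪v, ds⟫ := nonneg_of_mul_nonneg_right hVIτ hτpos'
      rw [hds, inner_add_right, real_inner_smul_right, real_inner_smul_right] at h0ds
      linarith
    have hfinal : 0 ≤ ⟪v, d⟫ := by
      have hkone : ∀ kk : ℕ, (0:ℝ) < 1/(kk+2) := by intro kk; positivity
      have hklt : ∀ kk : ℕ, (1/(kk+2) : ℝ) < 1 := by
        intro kk
        rw [div_lt_one (by positivity)]
        have : (0:ℝ) ≤ (kk:ℝ) := Nat.cast_nonneg kk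
        linarith
      have hterm : ∀ kk : ℕ, 0 ≤ (1 - 1/(kk+2) : ℝ) * ⟪v, d⟫ + (1/(kk+2)) * ⟪v, ehat⟫ :=
        fun kk => hkey _ (hkone kk) (hklt kk)
      have hlim1 : Filter.Tendsto (fun kk : ℕ => (1/(kk+2) : ℝ)) Filter.atTop (nhds 0) := by
        have h9 := (tendsto_one_div_add_atTop_nhds_zero_nat (𝕜 := ℝ)).comp
          (Filter.tendsto_add_atTop_nat 1)
        convert h9 using 2 with kk
        simp only [Function.comp_apply]
        push_cast
        ring
      have hlim : Filter.Tendsto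
          (fun kk : ℕ => (1 - 1/(kk+2) : ℝ) * ⟪v, d⟫ + (1/(kk+2)) * ⟪v, ehat⟫)
          Filter.atTop (nhds ((1 - 0) * ⟪v, d⟫ + 0 * ⟪v, ehat⟫)) :=
        ((tendsto_const_nhds.sub hlim1).mul_const _).add (hlim1.mul_const _)
      have hres := le_of_tendsto_of_tendsto' tendsto_const_nhds hlim hterm
      simpa using hres
    linarith
  obtain ⟨p, hpP, μ, hμnn, hvdecomp⟩ := hclaim
  set lam0 : Fin n → ℝ := fun j => if j ∈ J₀ then μ j else 0 with hlam0
  refine ⟨astar, (WithLp.equiv 2 _).symm lam0, hastarA, ?_, ?_⟩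
  · intro j
    simp only [WithLp.equiv_symm_apply, PiLp.toLp_apply, hlam0]
    by_cases hj : j ∈ J₀ <;> simp [hj, hμnn j]
  intro a ha lam hlam
  have hsum : mulVecE K.transpose ((WithLp.equiv 2 _).symm lam0) = ∑ j ∈ J₀, μ j • k j := by
    rw [mulVecE_transpose]
    rw [← Finset.sum_subset (Finset.subset_univ J₀)]
    · apply Finset.sum_congr rfl
      intro j hj
      simp only [WithLp.equiv_symm_apply, PiLp.toLp_apply, hlam0, hj, if_true]
      rfl
    · intro j _ hj
      simp only [WithLp.equiv_symm_apply, PiLp.toLp_apply, hlam0, hj, if_false]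
      rw [zero_smul]
  have hfirst : M astar + mulVecE K.transpose ((WithLp.equiv 2 _).symm lam0) = p := by
    rw [hsum, ← hv, hvdecomp]
    have : ∑ j ∈ J₀, μ j • g j = -∑ j ∈ J₀, μ j • k j := by
      rw [← Finset.sum_neg_distrib]
      apply Finset.sum_congr rfl
      intro j hj
      simp [hg, hj]
    rw [this]
    abel
  have hterm1 : 0 ≤ ⟪M astar + mulVecE K.transpose ((WithLp.equiv 2 _).symm lam0), a - astar⟫ := by
    rw [hfirst]
    exact hpP a ha
  have hterm2 : 0 ≤ ⟪l - mulVecE K astar, lam - (WithLp.equiv 2 _).symm lam0⟫ := by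
    rw [PiLp.inner_apply]
    apply Finset.sum_nonneg
    intro j _
    simp only [RCLike.inner_apply, conj_trivial]
    have hslack : 0 ≤ l j - mulVecE K astar j := by
      rw [hmulk]
      have := hastarC j
      linarith [hastarC j]
    by_cases hj : j ∈ J₀
    · have hz : l j - mulVecE K astar j = 0 := by
        rw [hmulk]
        have hact : ⟪k j, astar⟫ = l j := (Finset.mem_filter.mp hj).2
        linarith
      simp only [PiLp.sub_apply]
      rw [hz, mul_zero]
    · have hl0 : ((WithLp.equiv 2 _).symm lam0 : EuclideanSpace ℝ (Fin n)) j = 0 := by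
        simp [hlam0, hj]
      simp only [PiLp.sub_apply]
      rw [hl0, sub_zero]
      exact mul_nonneg (hlam j) hslack
  linarith
end

section
/- Suppose A ⊆ ℝ^D is nonempty, compact and convex, M : ℝ^D → ℝ^D is continuous, and there exists a Slater point â ∈ A with (Kâ)_j < l_j for every coordinate j ∈ {1,…,n}. Then there exists a constant Λ > 0 such that every solution (a*, λ*) of VI(W, A × ℝ^n_+) satisfies ‖λ*‖ ≤ Λ. -/
open scoped RealInnerProductSpace

lemma inner_mulVecE {n D : ℕ} (K : Matrix (Fin n) (Fin D) ℝ) (lam : EuclideanSpace ℝ (Fin n))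
    (x : EuclideanSpace ℝ (Fin D)) :
    ⟪mulVecE K.transpose lam, x⟫ = ⟪lam, mulVecE K x⟫ := by
  simp only [mulVecE, PiLp.inner_apply, RCLike.inner_apply, conj_trivial,
    WithLp.equiv_symm_apply, WithLp.equiv_apply, PiLp.toLp_apply, Matrix.mulVec, dotProduct,
    Matrix.transpose_apply, Finset.sum_mul, Finset.mul_sum]
  rw [Finset.sum_comm]
  apply Finset.sum_congr rfl; intro i _; apply Finset.sum_congr rfl; intro j _; ring

lemma mulVecE_sub {n D : ℕ} (K : Matrix (Fin n) (Fin D) ℝ)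
    (x y : EuclideanSpace ℝ (Fin D)) :
    mulVecE K (x - y) = mulVecE K x - mulVecE K y := by
  ext j
  simp [mulVecE, Matrix.mulVec_sub]

lemma norm_le_sum {n : ℕ} (x : EuclideanSpace ℝ (Fin n)) (h : ∀ j, 0 ≤ x j) :
    ‖x‖ ≤ ∑ j, x j := by
  rw [EuclideanSpace.norm_eq]
  rw [show ∑ j, x j = Real.sqrt ((∑ j, x j)^2) from
    (Real.sqrt_sq (Finset.sum_nonneg fun j _ => h j)).symm]
  apply Real.sqrt_le_sqrt
  calc ∑ i, ‖x i‖^2 = ∑ i, (x i)^2 := by simp [sq_abs]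
    _ ≤ (∑ i, x i)^2 := Finset.sum_sq_le_sq_sum_of_nonneg (fun i _ => h i)

/-- under a Slater condition, the dual parts of solutions of
`VI(W, A × ℝⁿ₊)` are uniformly bounded. -/
theorem stmt_5 (D n : ℕ)
    (A : Set (EuclideanSpace ℝ (Fin D))) (hAne : A.Nonempty)
    (hAcomp : IsCompact A) (hAconv : Convex ℝ A)
    (K : Matrix (Fin n) (Fin D) ℝ) (l : EuclideanSpace ℝ (Fin n))
    (M : EuclideanSpace ℝ (Fin D) → EuclideanSpace ℝ (Fin D)) (hM : Continuous M)
    (ahat : EuclideanSpace ℝ (Fin D)) (hahatA : ahat ∈ A)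
    (hahatC : ∀ j, mulVecE K ahat j < l j) :
    ∃ Λ : ℝ, 0 < Λ ∧
      ∀ astar : EuclideanSpace ℝ (Fin D), ∀ lstar : EuclideanSpace ℝ (Fin n),
        astar ∈ A → (∀ j, 0 ≤ lstar j) →
        (∀ a ∈ A, ∀ lam : EuclideanSpace ℝ (Fin n), (∀ j, 0 ≤ lam j) →
          0 ≤ ⟪M astar + mulVecE K.transpose lstar, a - astar⟫
              + ⟪l - mulVecE K astar, lam - lstar⟫) →
        ‖lstar‖ ≤ Λ := by
  rcases Nat.eq_zero_or_pos n with hn | hn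
  · refine ⟨1, one_pos, fun astar lstar _ _ _ => ?_⟩
    have hl0 : lstar = 0 := by
      ext j
      exact absurd j.2 (by omega)
    simp [hl0]
  · haveI : Nonempty (Fin n) := ⟨⟨0, hn⟩⟩
    set f : EuclideanSpace ℝ (Fin D) → ℝ := fun a => ⟪M a, ahat - a⟫ with hf
    have hfc : Continuous f := hM.inner (continuous_const.sub continuous_id)
    obtain ⟨a0, _, ha0⟩ := hAcomp.exists_isMaxOn hAne hfc.continuousOn
    set C : ℝ := max (f a0) 0 with hC
    have hC0 : 0 ≤ C := le_max_right _ _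
    set δ : ℝ := Finset.univ.inf' Finset.univ_nonempty
      (fun j => l j - mulVecE K ahat j) with hδ
    have hδpos : 0 < δ :=
      (Finset.lt_inf'_iff _).mpr fun j _ => sub_pos.mpr (hahatC j)
    refine ⟨C / δ + 1, by positivity, fun astar lstar hA hpos hVI => ?_⟩
    -- Step 1: ⟪l - K a*, λ*⟫ ≤ 0 (take a = a*, λ = 0)
    have h2 : ⟪l - mulVecE K astar, lstar⟫ ≤ 0 := by
      have h := hVI astar hA 0 (fun j => le_rfl)
      rw [sub_self, inner_zero_right, zero_sub, inner_neg_right] at h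
      linarith
    -- Step 2: take a = â, λ = λ*
    have h3 := hVI ahat hahatA lstar hpos
    rw [sub_self, inner_zero_right, add_zero, inner_add_left, inner_mulVecE] at h3
    -- derive ⟪λ*, l - K â⟫ ≤ C
    have key : ⟪lstar, l - mulVecE K ahat⟫ ≤ C := by
      have hsplit : ⟪lstar, mulVecE K (ahat - astar)⟫
          = ⟪l - mulVecE K astar, lstar⟫ - ⟪lstar, l - mulVecE K ahat⟫ := by
        rw [mulVecE_sub, real_inner_comm lstar (l - mulVecE K astar),
          inner_sub_right, inner_sub_right, inner_sub_right]
        ring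
      rw [hsplit] at h3
      have hfa : f astar ≤ C := le_trans (ha0 hA) (le_max_left _ _)
      have : ⟪M astar, ahat - astar⟫ = f astar := rfl
      linarith
    -- lower bound: δ * ∑ λ*_j ≤ ⟪λ*, l - K â⟫
    have hlow : δ * ∑ j, lstar j ≤ ⟪lstar, l - mulVecE K ahat⟫ := by
      rw [PiLp.inner_apply, Finset.mul_sum]
      apply Finset.sum_le_sum
      intro j _
      have h1 : δ ≤ l j - mulVecE K ahat j :=
        Finset.inf'_le _ (Finset.mem_univ j)
      have h2' : (l - mulVecE K ahat) j = l j - mulVecE K ahat j := rfl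
      simp only [RCLike.inner_apply, conj_trivial, h2']
      calc δ * lstar j ≤ (l j - mulVecE K ahat j) * lstar j :=
            mul_le_mul_of_nonneg_right h1 (hpos j)
        _ = (l j - mulVecE K ahat j) * lstar j := by ring
    have hsum : ∑ j, lstar j ≤ C / δ := by
      rw [le_div_iff₀ hδpos]
      calc (∑ j, lstar j) * δ = δ * ∑ j, lstar j := by ring
        _ ≤ C := le_trans hlow key
    calc ‖lstar‖ ≤ ∑ j, lstar j := norm_le_sum lstar hpos
      _ ≤ C / δ := hsum
      _ ≤ C / δ + 1 := by linarith
end
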